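/- Let A ∈ ℝ^{n×n}, b ∈ ℝⁿ, and h > 0. If rank C_j(A,b) < j (i.e., b, Ab, …, A^{j−1}b are linearly dependent), then rank C_j(e^{Ah}, b) < j, where C_j(M,b) = [b, Mb, …, M^{j−1}b]. -/

import Mathlib

open Matrix BigOperators

/-- The truncated controllability matrix `C_j(M,b) = [b, Mb, …, M^{j−1} b]`. -/
def ctrb {n : ℕ} (M : Matrix (Fin n) (Fin n) ℝ) (b : Fin n → ℝ) (j : ℕ) :
    Matrix (Fin n) (Fin j) ℝ :=
  fun i q => (M ^ (q : ℕ)).mulVec b i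

/-!
The Krylov spaces `span {b, Mb, …, M^{k-1} b}` grow strictly until they stabilise, and a stabilised
one is `M`-invariant and contains `b`. So if `rank C_j(A,b) < j`, some `K = span {b, …, A^{k-1} b}`
with `k < j` is `A`-invariant. The matrices preserving `K` form a closed subalgebra, which therefore
contains `e^{hA}` along with `A`; hence every column of `C_j(e^{hA},b)` lies in `K`, of dimension `< j`.
-/

open Module Submodule

namespace Matrix

variable {ι R : Type*} [Fintype ι] [DecidableEq ι] [CommRing R]

def stabilizerSubalgebra (p : Submodule R (ι → R)) : Subalgebra R (Matrix ι ι R) where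
  carrier := {N | ∀ x ∈ p, N *ᵥ x ∈ p}
  mul_mem' {M N} hM hN x hx := by
    rw [← mulVec_mulVec]
    exact hM _ (hN x hx)
  add_mem' {M N} hM hN x hx := by
    rw [add_mulVec]
    exact add_mem (hM x hx) (hN x hx)
  algebraMap_mem' r x hx := by
    rw [Algebra.algebraMap_eq_smul_one, smul_mulVec, one_mulVec]
    exact p.smul_mem r hx

theorem mem_stabilizerSubalgebra {p : Submodule R (ι → R)} {N : Matrix ι ι R} :
    N ∈ stabilizerSubalgebra p ↔ ∀ x ∈ p, N *ᵥ x ∈ p :=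
  Iff.rfl

theorem isClosed_stabilizerSubalgebra {𝕜 : Type*} [NontriviallyNormedField 𝕜] [CompleteSpace 𝕜]
    (p : Submodule 𝕜 (ι → 𝕜)) :
    IsClosed (stabilizerSubalgebra p : Set (Matrix ι ι 𝕜)) :=
  (stabilizerSubalgebra p).toSubmodule.closed_of_finiteDimensional

def krylov (M : Matrix ι ι R) (b : ι → R) (j : ℕ) : Submodule R (ι → R) :=
  span R (Set.range fun q : Fin j => (M ^ (q : ℕ)) *ᵥ b)

variable (M : Matrix ι ι R) (b : ι → R)

theorem pow_mulVec_mem_krylov {i j : ℕ} (hi : i < j) : (M ^ i) *ᵥ b ∈ krylov M b j :=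
  subset_span ⟨⟨i, hi⟩, rfl⟩

theorem krylov_mono : Monotone (krylov M b) := fun _ _ hjk =>
  span_le.mpr <| Set.range_subset_iff.mpr fun q => pow_mulVec_mem_krylov M b (by omega)

theorem mulVec_mem_krylov_succ {j : ℕ} {x : ι → R} (hx : x ∈ krylov M b j) :
    M *ᵥ x ∈ krylov M b (j + 1) := by
  suffices krylov M b j ≤ (krylov M b (j + 1)).comap (toLin' M) from this hx
  refine span_le.mpr <| Set.range_subset_iff.mpr fun q => ?_
  change M *ᵥ ((M ^ (q : ℕ)) *ᵥ b) ∈ krylov M b (j + 1)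
  rw [mulVec_mulVec, ← pow_succ']
  exact pow_mulVec_mem_krylov M b (by omega)

theorem krylov_le {p : Submodule R (ι → R)} (hb : b ∈ p) (hM : M ∈ stabilizerSubalgebra p)
    (j : ℕ) : krylov M b j ≤ p :=
  span_le.mpr <| Set.range_subset_iff.mpr fun _ =>
    mem_stabilizerSubalgebra.mp (pow_mem hM _) b hb

theorem mem_stabilizerSubalgebra_krylov {k : ℕ} (hk : krylov M b k = krylov M b (k + 1)) :
    M ∈ stabilizerSubalgebra (krylov M b k) := fun _ hx =>
  hk ▸ mulVec_mem_krylov_succ M b hx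

theorem mem_krylov_of_krylov_eq_succ {k : ℕ} (hk : krylov M b k = krylov M b (k + 1)) :
    b ∈ krylov M b k := by
  simpa [hk] using pow_mulVec_mem_krylov M b k.succ_pos

theorem exists_lt_krylov_eq_succ_of_finrank_lt {𝕜 : Type*} [Field 𝕜] (M : Matrix ι ι 𝕜)
    (b : ι → 𝕜) {j : ℕ} (hj : finrank 𝕜 (krylov M b j) < j) :
    ∃ k < j, krylov M b k = krylov M b (k + 1) := by
  by_contra! hne
  have hgrow : ∀ k ≤ j, k ≤ finrank 𝕜 (krylov M b k) := by
    intro k hk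
    induction k with
    | zero => exact Nat.zero_le _
    | succ k ih =>
      have hlt := lt_of_le_of_ne (krylov_mono M b (k.le_add_right 1)) (hne k hk)
      have := finrank_lt_finrank_of_lt hlt
      have := ih (by omega)
      omega
  have := hgrow j le_rfl
  omega

end Matrix

theorem rank_ctrb_eq_finrank_krylov {n : ℕ} (M : Matrix (Fin n) (Fin n) ℝ) (b : Fin n → ℝ)
    (j : ℕ) : (ctrb M b j).rank = finrank ℝ (krylov M b j) :=
  rank_eq_finrank_span_cols _

theorem rank_ctrb_exp_lt_general {n : ℕ} (j : ℕ) (A : Matrix (Fin n) (Fin n) ℝ) (b : Fin n → ℝ)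
    (h : ℝ) (hrank : (ctrb A b j).rank < j) :
    (ctrb (NormedSpace.exp (h • A)) b j).rank < j := by
  rw [rank_ctrb_eq_finrank_krylov] at hrank ⊢
  obtain ⟨k, hkj, hk⟩ := exists_lt_krylov_eq_succ_of_finrank_lt A b hrank
  have hA := mem_stabilizerSubalgebra_krylov A b hk
  have hexp : NormedSpace.exp (h • A) ∈ stabilizerSubalgebra (krylov A b k) :=
    NormedSpace.exp_mem (isClosed_stabilizerSubalgebra _) (Subalgebra.smul_mem _ hA h)
  calc finrank ℝ (krylov (NormedSpace.exp (h • A)) b j)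
      ≤ finrank ℝ (krylov A b k) :=
        finrank_mono (krylov_le _ b (mem_krylov_of_krylov_eq_succ A b hk) hexp j)
    _ ≤ finrank ℝ (krylov A b j) := finrank_mono (krylov_mono A b hkj.le)
    _ < j := hrank

/-- If `rank C_j(A,b) < j`, then `rank C_j(e^{Ah}, b) < j` for any `h > 0`. -/
theorem rank_ctrb_exp_lt {n : ℕ} (j : ℕ) (A : Matrix (Fin n) (Fin n) ℝ) (b : Fin n → ℝ)
    (h : ℝ) (hh : 0 < h) (hrank : (ctrb A b j).rank < j) :
    (ctrb (NormedSpace.exp (h • A)) b j).rank < j :=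
  rank_ctrb_exp_lt_general j A b h hrank
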